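/- arXiv:1111.1338 — 10 statements merged into one kernel-verified Lean document; each statement's English description precedes it below -/
import Mathlib

section
/- Let R be a (not necessarily commutative) ring and let N, L, L1, M, N1, L2, M1 ∈ R satisfy N*L = L1*M and N1*L1 = L2*M1. Then for all A, B ∈ R one has (N1 + L2*B)*(N + L1*A)*L = L2*(M1*M + C*L), where C = M1*A + B*L1*A + B*N. (Correctness of composition of two Darboux transformations with expansion: the composed transformation's operator lies in the same expansion-equivalence class as M1*M.) -/
/-! Expanding `N ↦ N + L₁ * A` turns the intertwining relation `N * L = L₁ * M` into
`(N + L₁ * A) * L = L₁ * (M + A * L)`, and two intertwining relations compose as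
`(N₁ * N) * L = L₂ * (M₁ * M)`. Applying the expansion to both factors and composing gives the
claim once `B * L₁ * M` is rewritten as `B * N * L`. -/

section Intertwining

variable {R : Type*} [Semiring R]

theorem intertwining_add_expansion {N L L₁ M : R} (h : N * L = L₁ * M) (A : R) :
    (N + L₁ * A) * L = L₁ * (M + A * L) := by
  rw [add_mul, mul_add, h, mul_assoc]

theorem intertwining_comp {N L L₁ M N₁ L₂ M₁ : R} (h : N * L = L₁ * M)
    (h₁ : N₁ * L₁ = L₂ * M₁) : N₁ * N * L = L₂ * (M₁ * M) := by
  rw [mul_assoc, h, ← mul_assoc, h₁, mul_assoc]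

end Intertwining

/-- Correctness of composition of two Darboux transformations with expansion:
if `N*L = L1*M` and `N1*L1 = L2*M1`, then for all `A, B`,
`(N1 + L2*B)*(N + L1*A)*L = L2*(M1*M + C*L)` with `C = M1*A + B*L1*A + B*N`. -/
theorem composition_with_expansion {R : Type*} [Ring R]
    (N L L1 M N1 L2 M1 : R)
    (h : N * L = L1 * M) (h1 : N1 * L1 = L2 * M1) (A B : R) :
    (N1 + L2 * B) * (N + L1 * A) * L
      = L2 * (M1 * M + (M1 * A + B * L1 * A + B * N) * L) := by
  rw [intertwining_comp (intertwining_add_expansion h A) (intertwining_add_expansion h1 B)]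
  congr 1
  simp only [add_mul, mul_add, mul_assoc, ← h]
  abel
end

section
/- Let a, b, c, q, r ∈ K with q ≠ 0, and suppose the two equations of system (S) hold: (S1) −q·r_x + q²·r_y + q_x·r − b·q_x + b_x·q + q²·(b_y − a·q_y − a_x) − q³·a_y + q_y·q_x − q_xy·q = 0, and (S2) −c·q_x + (c − a·r)·q_y·q + (a·r + r_y)·q_x + (c_y − r·a_y)·q² + (r·r_y − a·r_x − r_y·b − r_xy − r·a_x + c_x)·q = 0. Then there exist a1, b1, c1 ∈ K such that for all ψ ∈ K: N(L(ψ)) = L1(M(ψ)), where L(ψ) = ψ_xy + a·ψ_x + b·ψ_y + c·ψ, M(ψ) = ψ_x + q·ψ_y + r·ψ, N(ψ) = ψ_x + q·ψ_y + (r − q_x/q + q_y)·ψ, and L1(ψ) = ψ_xy + a1·ψ_x + b1·ψ_y + c1·ψ. (Sufficiency of system (S) for the existence of a Darboux transformation with M of bi-degree (1,1); moreover the auxiliary operator is N = M − (ln q)_x + q_y.) -/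
/-!
Matching the coefficients of `ψ_xx`, `ψ_yy` and `ψ_x` in `N (L ψ) = L₁ (M ψ)` forces
`a₁ = a`, `b₁ = b - q_x / q` and `c₁ = a_x + q a_y + a q_y - a q_x / q + c - r_y`.
The `ψ_xy` coefficients then agree because of the zeroth-order term chosen for `N`, and the
remaining `ψ_y` and `ψ` coefficients of `q (N L - L₁ M)` are the left-hand sides of (S1) and (S2).
-/

namespace Darboux

variable {R K : Type*} [CommRing R] [Field K] [Algebra R K] (X Y : Derivation R K K)

def hyperbolicOp (a b c : K) (ψ : K) : K := X (Y ψ) + a * X ψ + b * Y ψ + c * ψ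

def firstOrderOp (q r : K) (ψ : K) : K := X ψ + q * Y ψ + r * ψ

def systemS1 (a b q r : K) : K :=
  -q * X r + q ^ 2 * Y r + X q * r - b * X q + X b * q
    + q ^ 2 * (Y b - a * Y q - X a) - q ^ 3 * Y a + Y q * X q - X (Y q) * q

def systemS2 (a b c q r : K) : K :=
  -c * X q + (c - a * r) * Y q * q + (a * r + Y r) * X q + (Y c - r * Y a) * q ^ 2
    + (r * Y r - a * X r - Y r * b - X (Y r) - r * X a + X c) * q

variable {X Y}

theorem mul_firstOrderOp_hyperbolicOp_sub (hcomm : ∀ f : K, X (Y f) = Y (X f))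
    (a b c : K) {q : K} (r : K) (hq : q ≠ 0) (ψ : K) :
    q * (firstOrderOp X Y q (r - X q / q + Y q) (hyperbolicOp X Y a b c ψ)
        - hyperbolicOp X Y a (b - X q / q) (X a + q * Y a + a * Y q - a * (X q / q) + c - Y r)
            (firstOrderOp X Y q r ψ))
      = systemS1 X Y a b q r * Y ψ + systemS2 X Y a b c q r * ψ := by
  simp only [firstOrderOp, hyperbolicOp, systemS1, systemS2, map_add, Derivation.leibniz,
    smul_eq_mul, hcomm]
  field_simp
  ring

end Darboux

open Darboux in
/-- Sufficiency of system (S) for the existence of a Darboux transformation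
with `M` of bi-degree (1,1); the auxiliary operator is
`N = M − (ln q)_x + q_y`, i.e. `N = D_x + q D_y + (r − q_x/q + q_y)`. -/
theorem darboux_exists_of_system {K : Type*} [Field K] [CharZero K]
    (X Y : Derivation ℚ K K) (hcomm : ∀ f : K, X (Y f) = Y (X f))
    (a b c q r : K) (hq : q ≠ 0)
    (hS1 : -q * X r + q ^ 2 * Y r + X q * r - b * X q + X b * q
        + q ^ 2 * (Y b - a * Y q - X a) - q ^ 3 * Y a + Y q * X q
        - X (Y q) * q = 0)
    (hS2 : -c * X q + (c - a * r) * Y q * q + (a * r + Y r) * X q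
        + (Y c - r * Y a) * q ^ 2
        + (r * Y r - a * X r - Y r * b - X (Y r) - r * X a + X c) * q = 0)
    (L M N : K → K)
    (hL : ∀ ψ : K, L ψ = X (Y ψ) + a * X ψ + b * Y ψ + c * ψ)
    (hM : ∀ ψ : K, M ψ = X ψ + q * Y ψ + r * ψ)
    (hN : ∀ ψ : K, N ψ = X ψ + q * Y ψ + (r - X q / q + Y q) * ψ) :
    ∃ a1 b1 c1 : K, ∀ ψ : K,
      N (L ψ) = X (Y (M ψ)) + a1 * X (M ψ) + b1 * Y (M ψ) + c1 * M ψ := by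
  obtain rfl : L = hyperbolicOp X Y a b c := funext hL
  obtain rfl : M = firstOrderOp X Y q r := funext hM
  obtain rfl : N = firstOrderOp X Y q (r - X q / q + Y q) := funext hN
  refine ⟨a, b - X q / q, X a + q * Y a + a * Y q - a * (X q / q) + c - Y r, fun ψ => ?_⟩
  have key := mul_firstOrderOp_hyperbolicOp_sub hcomm a b c r hq ψ
  rw [show systemS1 X Y a b q r = 0 from hS1, show systemS2 X Y a b c q r = 0 from hS2,
    zero_mul, zero_mul, add_zero, mul_eq_zero, sub_eq_zero] at key
  exact key.resolve_left hq
end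

section
/- Let a, b, c ∈ K, let L act on K by L(ψ) = ψ_xy + a·ψ_x + b·ψ_y + c·ψ, and let ψ1, ψ2 ∈ K satisfy L(ψ1) = 0 and L(ψ2) = 0. Set d = −ψ1·(ψ2)_y + ψ2·(ψ1)_y, α = ψ1·(ψ2)_x − ψ2·(ψ1)_x, β = −(ψ2)_x·(ψ1)_y + (ψ2)_y·(ψ1)_x, and assume d ≠ 0. Then q := α/d and r := β/d satisfy both equations of system (S): (S1) −q·r_x + q²·r_y + q_x·r − b·q_x + b_x·q + q²·(b_y − a·q_y − a_x) − q³·a_y + q_y·q_x − q_xy·q = 0, and (S2) −c·q_x + (c − a·r)·q_y·q + (a·r + r_y)·q_x + (c_y − r·a_y)·q² + (r·r_y − a·r_x − r_y·b − r_xy − r·a_x + c_x)·q = 0. (Darboux's Wronskian formula gives a Darboux transformation of bi-degree (1,1).) -/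
/-!
By Cramer's rule, `q` and `r` are exactly the coefficients for which `M = D_x + q D_y + r`
annihilates `ψ1` and `ψ2`. For any common solution `ψ` of `L ψ = M ψ = 0`, the equation `M ψ = 0`
differentiated in `y` expresses `q ψ_yy` through `ψ_y` and `ψ`; differentiating that relation once
more in `x` and eliminating `ψ_yy` leaves `S₁ ψ_y + S₂ ψ = 0`. Since the determinant `d` of the
vectors `(ψ1_y, ψ1)` and `(ψ2_y, ψ2)` is nonzero, `S₁ = S₂ = 0`.
-/

theorem add_mul_add_mul_eq_zero_of_cramer {K : Type*} [Field K] {d q r u₁ v₁ w₁ u₂ v₂ w₂ : K}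
    (hd : d = -w₁ * v₂ + w₂ * v₁) (hdne : d ≠ 0)
    (hq : q = (w₁ * u₂ - w₂ * u₁) / d) (hr : r = (-u₂ * v₁ + v₂ * u₁) / d) :
    u₁ + q * v₁ + r * w₁ = 0 ∧ u₂ + q * v₂ + r * w₂ = 0 := by
  subst hq hr
  constructor <;> field_simp <;> rw [hd] <;> ring

theorem eq_zero_and_eq_zero_of_mul_add_mul {A : Type*} [CommRing A] [NoZeroDivisors A]
    {s t v₁ w₁ v₂ w₂ : A} (h₁ : s * v₁ + t * w₁ = 0) (h₂ : s * v₂ + t * w₂ = 0)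
    (hd : -w₁ * v₂ + w₂ * v₁ ≠ 0) : s = 0 ∧ t = 0 := by
  have hs : s * (-w₁ * v₂ + w₂ * v₁) = 0 := by linear_combination w₂ * h₁ - w₁ * h₂
  have ht : t * (-w₁ * v₂ + w₂ * v₁) = 0 := by linear_combination v₁ * h₂ - v₂ * h₁
  exact ⟨(mul_eq_zero.mp hs).resolve_right hd, (mul_eq_zero.mp ht).resolve_right hd⟩

namespace Darboux

variable {R A : Type*} [CommSemiring R] [CommRing A] [Algebra R A]

def S₁ (X Y : Derivation R A A) (a b q r : A) : A :=
  -q * X r + q ^ 2 * Y r + X q * r - b * X q + X b * q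
    + q ^ 2 * (Y b - a * Y q - X a) - q ^ 3 * Y a + Y q * X q - X (Y q) * q

def S₂ (X Y : Derivation R A A) (a b c q r : A) : A :=
  -c * X q + (c - a * r) * Y q * q + (a * r + Y r) * X q + (Y c - r * Y a) * q ^ 2
    + (r * Y r - a * X r - Y r * b - X (Y r) - r * X a + X c) * q

variable {X Y : Derivation R A A} {a b c q r ψ : A}

theorem mixed_eq (hL : X (Y ψ) + a * X ψ + b * Y ψ + c * ψ = 0)
    (hM : X ψ + q * Y ψ + r * ψ = 0) :
    X (Y ψ) = (a * q - b) * Y ψ + (a * r - c) * ψ := by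
  linear_combination hL - a * hM

theorem mul_yy_add_eq_zero (hcomm : ∀ f, X (Y f) = Y (X f))
    (hL : X (Y ψ) + a * X ψ + b * Y ψ + c * ψ = 0) (hM : X ψ + q * Y ψ + r * ψ = 0) :
    q * Y (Y ψ) + (Y q + r + a * q - b) * Y ψ + (Y r + a * r - c) * ψ = 0 := by
  have h := congrArg Y hM
  simp only [map_add, Derivation.leibniz, smul_eq_mul, map_zero, ← hcomm] at h
  linear_combination h - mixed_eq hL hM

theorem mixed_yy_eq (hcomm : ∀ f, X (Y f) = Y (X f))
    (hL : X (Y ψ) + a * X ψ + b * Y ψ + c * ψ = 0) (hM : X ψ + q * Y ψ + r * ψ = 0) :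
    X (Y (Y ψ)) = Y (a * q - b) * Y ψ + (a * q - b) * Y (Y ψ)
      + Y (a * r - c) * ψ + (a * r - c) * Y ψ := by
  rw [hcomm, mixed_eq hL hM]
  simp only [map_add, Derivation.leibniz, smul_eq_mul]
  ring

theorem S₁_mul_add_S₂_mul_eq_zero (hcomm : ∀ f, X (Y f) = Y (X f))
    (hL : X (Y ψ) + a * X ψ + b * Y ψ + c * ψ = 0) (hM : X ψ + q * Y ψ + r * ψ = 0) :
    S₁ X Y a b q r * Y ψ + S₂ X Y a b c q r * ψ = 0 := by
  have hyy := mul_yy_add_eq_zero hcomm hL hM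
  have hxyy := congrArg X hyy
  simp only [map_add, map_sub, Derivation.leibniz, smul_eq_mul, map_zero] at hxyy
  rw [mixed_yy_eq hcomm hL hM, mixed_eq hL hM] at hxyy
  simp only [map_sub, Derivation.leibniz, smul_eq_mul] at hxyy
  unfold S₁ S₂
  -- the coefficient of `hyy` is the coefficient of `ψ_yy` in `hxyy`, so `ψ_yy` cancels
  linear_combination (-q) * hxyy + (X q + q * (a * q - b)) * hyy + q * (Y r + a * r - c) * hM

end Darboux

/-- Darboux's Wronskian formula gives a Darboux transformation of
bi-degree (1,1): with `q = α/d` and `r = β/d` built from two solutions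
`ψ1, ψ2` of `L ψ = 0`, both equations of system (S) hold. -/
theorem wronskian_solves_system {K : Type*} [Field K] [CharZero K]
    (X Y : Derivation ℚ K K) (hcomm : ∀ f : K, X (Y f) = Y (X f))
    (a b c : K) (L : K → K)
    (hL : ∀ ψ : K, L ψ = X (Y ψ) + a * X ψ + b * Y ψ + c * ψ)
    (ψ1 ψ2 : K) (h1 : L ψ1 = 0) (h2 : L ψ2 = 0)
    (d α β q r : K)
    (hd : d = -ψ1 * Y ψ2 + ψ2 * Y ψ1) (hdne : d ≠ 0)
    (hα : α = ψ1 * X ψ2 - ψ2 * X ψ1)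
    (hβ : β = -(X ψ2) * Y ψ1 + Y ψ2 * X ψ1)
    (hq : q = α / d) (hr : r = β / d) :
    (-q * X r + q ^ 2 * Y r + X q * r - b * X q + X b * q
        + q ^ 2 * (Y b - a * Y q - X a) - q ^ 3 * Y a + Y q * X q
        - X (Y q) * q = 0) ∧
    (-c * X q + (c - a * r) * Y q * q + (a * r + Y r) * X q
        + (Y c - r * Y a) * q ^ 2
        + (r * Y r - a * X r - Y r * b - X (Y r) - r * X a + X c) * q = 0) := by
  subst hα hβ
  obtain ⟨hM1, hM2⟩ := add_mul_add_mul_eq_zero_of_cramer hd hdne hq hr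
  have hL1 := (hL ψ1).symm.trans h1
  have hL2 := (hL ψ2).symm.trans h2
  exact eq_zero_and_eq_zero_of_mul_add_mul
    (Darboux.S₁_mul_add_S₂_mul_eq_zero hcomm hL1 hM1)
    (Darboux.S₁_mul_add_S₂_mul_eq_zero hcomm hL2 hM2) (hd ▸ hdne)
end

section
/- Let a, b, c, q, r, α ∈ K and define the gauge-transformed coefficients a1 = a + α_y, b1 = b + α_x, c1 = c + a·α_x + b·α_y + α_xy + α_x·α_y, q1 = q, r1 = r + α_x + q·α_y. Then the gauge invariants of the pair are unchanged: q1 = q, a1_x − b1_y = a_x − b_y, a1·b1 − c1 + a1_x = a·b − c + a_x, and r1 − b1 − q1·a1 = r − b − q·a. (The functions q, m = a_x − b_y, h = ab − c + a_x, and R = r − b − qa are differential invariants of the pair (L, M) under gauge transformations by exp(α).) -/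
/-- The functions `q`, `m = a_x − b_y`, `h = ab − c + a_x`, `R = r − b − qa`
are differential invariants of the pair `(L, M)` under gauge transformations
by `exp(α)`. -/
theorem gauge_invariants {K : Type*} [Field K] [CharZero K]
    (X Y : Derivation ℚ K K) (hcomm : ∀ f : K, X (Y f) = Y (X f))
    (a b c q r α : K) (a1 b1 c1 q1 r1 : K)
    (ha1 : a1 = a + Y α)
    (hb1 : b1 = b + X α)
    (hc1 : c1 = c + a * X α + b * Y α + X (Y α) + X α * Y α)
    (hq1 : q1 = q)
    (hr1 : r1 = r + X α + q * Y α) :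
    q1 = q ∧
    X a1 - Y b1 = X a - Y b ∧
    a1 * b1 - c1 + X a1 = a * b - c + X a ∧
    r1 - b1 - q1 * a1 = r - b - q * a := by
  subst ha1 hb1 hc1 hq1 hr1
  refine ⟨rfl, ?_, ?_, by ring⟩
  · rw [map_add, map_add, hcomm]
    ring
  · rw [map_add]
    ring
end

section
/- Let a, b, c, q, r, α, β ∈ K with q ≠ 0, and define the gauged-evolution-transformed coefficients a1 = a + α_y + β, b1 = b + α_x + β·q, c1 = c + a·α_x + b·α_y + α_xy + α_y·α_x + β·r + β·α_x + β·q·α_y, q1 = q, r1 = r + α_x + q·α_y. For coefficients (a, b, c, q, r) set m = a_x − b_y, h = ab − c + a_x, R = r − b − qa, and define I1 = q, I2 = 2m − R_y + (R/q)_x, I3 = 2h + (R/q)_x − R²/(2q); define I1', I2', I3' by the same formulas from (a1, b1, c1, q1, r1). Then I1' = I1, I2' = I2, and I3' = I3. (The functions I1, I2, I3 are differential invariants of the pair (L, M) under gauged evolutions.) -/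
/-!
Along a gauged evolution `R` drops by `2βq`, so `R/q` drops by `2β`, while `m` gains
`β_x − (βq)_y` (the `α`-terms cancel because `∂x` and `∂y` commute) and `h` gains
`β_x − βR + β²q`. In `I2` and `I3` the term `(R/q)_x` absorbs the `β_x`, and in `I3`
completing the square in `R²/(2q)` absorbs `−βR + β²q`.
-/

section Coefficients

variable {k A : Type*} [CommRing k] [CommRing A] [Algebra k A] (X Y : Derivation k A A)

theorem gauge_R_eq (a b q r u v β : A) :
    (r + u + q * v) - (b + u + β * q) - q * (a + v + β) = (r - b - q * a) - 2 * (β * q) := by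
  ring

theorem gauge_m_eq {α : A} (hcomm : X (Y α) = Y (X α)) (a b q β : A) :
    X (a + Y α + β) - Y (b + X α + β * q) = (X a - Y b) + X β - Y (β * q) := by
  simp only [map_add, hcomm]
  ring

theorem gauge_h_eq (a b c q r α β : A) :
    (a + Y α + β) * (b + X α + β * q)
        - (c + a * X α + b * Y α + X (Y α) + Y α * X α + β * r + β * X α + β * q * Y α)
        + X (a + Y α + β)
      = (a * b - c + X a) + X β - β * (r - b - q * a) + β ^ 2 * q := by
  simp only [map_add]
  ring

end Coefficients

section Invariants

variable {k K : Type*} [CommRing k] [Field K] [Algebra k K] (X Y : Derivation k K K)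

theorem sub_two_mul_mul_div {q : K} (hq : q ≠ 0) (R β : K) :
    (R - 2 * (β * q)) / q = R / q - 2 * β := by
  field_simp

theorem invariant_two_gauge {q : K} (hq : q ≠ 0) (m R β : K) :
    2 * (m + X β - Y (β * q)) - Y (R - 2 * (β * q)) + X ((R - 2 * (β * q)) / q)
      = 2 * m - Y R + X (R / q) := by
  rw [sub_two_mul_mul_div hq]
  simp only [two_mul, map_add, map_sub]
  ring

theorem invariant_three_gauge [NeZero (2 : K)] {q : K} (hq : q ≠ 0) (h R β : K) :
    2 * (h + X β - β * R + β ^ 2 * q) + X ((R - 2 * (β * q)) / q)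
        - (R - 2 * (β * q)) ^ 2 / (2 * q)
      = 2 * h + X (R / q) - R ^ 2 / (2 * q) := by
  rw [sub_two_mul_mul_div hq, map_sub, two_mul β, map_add]
  field_simp
  ring

end Invariants

/-- The functions `I1 = q`, `I2 = 2m − R_y + (R/q)_x`,
`I3 = 2h + (R/q)_x − R²/(2q)` are differential invariants of the pair
`(L, M)` under gauged evolutions. -/
theorem gauged_evolution_invariants {K : Type*} [Field K] [CharZero K]
    (X Y : Derivation ℚ K K) (hcomm : ∀ f : K, X (Y f) = Y (X f))
    (a b c q r α β : K) (hq : q ≠ 0)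
    (a1 b1 c1 q1 r1 : K)
    (ha1 : a1 = a + Y α + β)
    (hb1 : b1 = b + X α + β * q)
    (hc1 : c1 = c + a * X α + b * Y α + X (Y α) + Y α * X α + β * r
        + β * X α + β * q * Y α)
    (hq1 : q1 = q)
    (hr1 : r1 = r + X α + q * Y α)
    (m h R : K)
    (hm : m = X a - Y b) (hh : h = a * b - c + X a) (hR : R = r - b - q * a)
    (m1 h1 R1 : K)
    (hm1 : m1 = X a1 - Y b1) (hh1 : h1 = a1 * b1 - c1 + X a1)
    (hR1 : R1 = r1 - b1 - q1 * a1)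
    (I1 I2 I3 I1' I2' I3' : K)
    (hI1 : I1 = q)
    (hI2 : I2 = 2 * m - Y R + X (R / q))
    (hI3 : I3 = 2 * h + X (R / q) - R ^ 2 / (2 * q))
    (hI1' : I1' = q1)
    (hI2' : I2' = 2 * m1 - Y R1 + X (R1 / q1))
    (hI3' : I3' = 2 * h1 + X (R1 / q1) - R1 ^ 2 / (2 * q1)) :
    I1' = I1 ∧ I2' = I2 ∧ I3' = I3 := by
  subst a1 b1 c1 q1 r1
  have hR1' : R1 = R - 2 * (β * q) := by rw [hR1, hR, gauge_R_eq]
  have hm1' : m1 = m + X β - Y (β * q) := by rw [hm1, hm, gauge_m_eq X Y (hcomm α)]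
  have hh1' : h1 = h + X β - β * R + β ^ 2 * q := by rw [hh1, hh, hR, gauge_h_eq]
  refine ⟨hI1'.trans hI1.symm, ?_, ?_⟩
  · rw [hI2', hI2, hm1', hR1', invariant_two_gauge X Y hq]
  · rw [hI3', hI3, hh1', hR1', invariant_three_gauge X hq]
end

section
/- Let a, b, c, q, r ∈ K, and set m = a_x − b_y, h = ab − c + a_x, R = r − b − qa. Then system (S), namely (S1) −q·r_x + q²·r_y + q_x·r − b·q_x + b_x·q + q²·(b_y − a·q_y − a_x) − q³·a_y + q_y·q_x − q_xy·q = 0 together with (S2) −c·q_x + (c − a·r)·q_y·q + (a·r + r_y)·q_x + (c_y − r·a_y)·q² + (r·r_y − a·r_x − r_y·b − r_xy − r·a_x + c_x)·q = 0, holds if and only if the invariantized system (S') holds: (S1') −2q²·m + q²·R_y + q_x·R + q_y·q_x − q·R_x − q_xy·q = 0, and (S2') q_x·h − q·h_x − q²·h_y − q_x·m + q_x·R_y + q·m_x − q·R_xy − q_y·q·h − q·R·m + q·R·R_y = 0. -/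
/-!
Substituting `m`, `h`, `R` and expanding with the Leibniz rule, the left side of (S1') is exactly
that of (S1), and the left side of (S2') is that of (S2) minus `a` times that of (S1). This
triangular change of equations is invertible, so the two systems are equivalent.
-/

namespace DarbouxSystem

variable {k A : Type*} [CommRing k] [CommRing A] [Algebra k A] (X Y : Derivation k A A)

def first (a b q r : A) : A :=
  -q * X r + q ^ 2 * Y r + X q * r - b * X q + X b * q
    + q ^ 2 * (Y b - a * Y q - X a) - q ^ 3 * Y a + Y q * X q - X (Y q) * q

def second (a b c q r : A) : A :=
  -c * X q + (c - a * r) * Y q * q + (a * r + Y r) * X q + (Y c - r * Y a) * q ^ 2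
    + (r * Y r - a * X r - Y r * b - X (Y r) - r * X a + X c) * q

def invFirst (m q R : A) : A :=
  -2 * q ^ 2 * m + q ^ 2 * Y R + X q * R + Y q * X q - q * X R - X (Y q) * q

def invSecond (m h q R : A) : A :=
  X q * h - q * X h - q ^ 2 * Y h - X q * m + X q * Y R + q * X m
    - q * X (Y R) - Y q * q * h - q * R * m + q * R * Y R

theorem invFirst_eq_first (a b q r : A) :
    invFirst X Y (X a - Y b) q (r - b - q * a) = first X Y a b q r := by
  simp only [invFirst, first, map_sub, Derivation.leibniz, smul_eq_mul]
  ring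

theorem invSecond_eq_second_sub (a b c q r : A) (hcomm : X (Y a) = Y (X a)) :
    invSecond X Y (X a - Y b) (a * b - c + X a) q (r - b - q * a)
      = second X Y a b c q r - a * first X Y a b q r := by
  simp only [invSecond, second, first, map_sub, map_add, Derivation.leibniz, smul_eq_mul, hcomm]
  ring

end DarbouxSystem

open DarbouxSystem in
/-- System (S) holds if and only if the invariantized system (S') holds,
where `m = a_x − b_y`, `h = ab − c + a_x`, `R = r − b − qa`. -/
theorem system_iff_invariantized {K : Type*} [Field K] [CharZero K]
    (X Y : Derivation ℚ K K) (hcomm : ∀ f : K, X (Y f) = Y (X f))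
    (a b c q r : K) (m h R : K)
    (hm : m = X a - Y b) (hh : h = a * b - c + X a)
    (hR : R = r - b - q * a) :
    ((-q * X r + q ^ 2 * Y r + X q * r - b * X q + X b * q
        + q ^ 2 * (Y b - a * Y q - X a) - q ^ 3 * Y a + Y q * X q
        - X (Y q) * q = 0) ∧
     (-c * X q + (c - a * r) * Y q * q + (a * r + Y r) * X q
        + (Y c - r * Y a) * q ^ 2
        + (r * Y r - a * X r - Y r * b - X (Y r) - r * X a + X c) * q = 0))
    ↔
    ((-2 * q ^ 2 * m + q ^ 2 * Y R + X q * R + Y q * X q - q * X R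
        - X (Y q) * q = 0) ∧
     (X q * h - q * X h - q ^ 2 * Y h - X q * m + X q * Y R + q * X m
        - q * X (Y R) - Y q * q * h - q * R * m + q * R * Y R = 0)) := by
  subst hm hh hR
  change first X Y a b q r = 0 ∧ second X Y a b c q r = 0 ↔
    invFirst X Y _ q _ = 0 ∧ invSecond X Y _ _ q _ = 0
  rw [invFirst_eq_first, invSecond_eq_second_sub X Y a b c q r (hcomm a)]
  exact and_congr_right fun h₁ => by rw [h₁, mul_zero, sub_zero]
end

section
/- Let q, R, h, m ∈ K with q ≠ 0, and set I2 = 2m − R_y + (R/q)_x, I3 = 2h + (R/q)_x − R²/(2q). Then system (S'), namely (S1') −2q²·m + q²·R_y + q_x·R + q_y·q_x − q·R_x − q_xy·q = 0 together with (S2') q_x·h − q·h_x − q²·h_y − q_x·m + q_x·R_y + q·m_x − q·R_xy − q_y·q·h − q·R·m + q·R·R_y = 0, holds if and only if the following two invariant conditions hold simultaneously: (E2) I2 + ∂y(q_x/q) = 0, and (E3) ∂x(I3) + q·∂y(I3) + (q_y − q_x/q)·I3 = (q_x/q)·∂y(q_x/q) − ∂x(∂y(q_x/q)). (Necessary and sufficient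 conditions for the existence of a Darboux transformation of bi-degree (1,1) in terms of the gauged evolution invariants; here (q_x/q) = Q_x and ∂y(q_x/q) = Q_xy for Q = ln q.) -/
/-!
Write `E2 = I2 + Q_xy` for the left-hand side of (E2). Expanding the quotients `R/q` and `q_x/q`
shows that the left-hand side of (S1') is `-q² E2`. Likewise, writing `E3` for the difference of
the two sides of (E3), the identity `q E3 = q ∂x E2 - (qR + q_x) E2 - 2 (S2')` holds whenever
`∂x` and `∂y` commute. Hence `E2 = 0` is equivalent to (S1'), and once it holds (E3) is
equivalent to (S2').
-/

theorem Derivation.map_ofNat {R A M : Type*} [CommSemiring R] [CommSemiring A] [AddCommMonoid M]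
    [Algebra R A] [Module A M] [Module R M] (D : Derivation R A M) (n : ℕ) [n.AtLeastTwo] :
    D (no_index (OfNat.ofNat n : A)) = 0 := by
  rw [← Nat.cast_ofNat, D.map_natCast]

section DarbouxInvariants

variable {k K : Type*} [CommRing k] [Field K] [Algebra k K] (X Y : Derivation k K K)

def systemS1 (q R m : K) : K :=
  -2 * q ^ 2 * m + q ^ 2 * Y R + X q * R + Y q * X q - q * X R - X (Y q) * q

def systemS2 (q R h m : K) : K :=
  X q * h - q * X h - q ^ 2 * Y h - X q * m + X q * Y R + q * X m
    - q * X (Y R) - Y q * q * h - q * R * m + q * R * Y R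

def invariantI2 (q R m : K) : K := 2 * m - Y R + X (R / q)

def invariantI3 (q R h : K) : K := 2 * h + X (R / q) - R ^ 2 / (2 * q)

def conditionE2 (q R m : K) : K := invariantI2 X Y q R m + Y (X q / q)

def conditionE3 (q R h : K) : K :=
  X (invariantI3 X q R h) + q * Y (invariantI3 X q R h) + (Y q - X q / q) * invariantI3 X q R h
    - ((X q / q) * Y (X q / q) - X (Y (X q / q)))

variable {X Y} {q : K}

theorem systemS1_eq_neg_sq_mul_conditionE2 (hcomm : ∀ f : K, X (Y f) = Y (X f)) (hq : q ≠ 0)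
    (R m : K) : systemS1 X Y q R m = -q ^ 2 * conditionE2 X Y q R m := by
  simp only [systemS1, conditionE2, invariantI2, Derivation.leibniz_div, hcomm, smul_eq_mul]
  field_simp
  ring

theorem mul_conditionE3_eq (hcomm : ∀ f : K, X (Y f) = Y (X f)) (h2 : (2 : K) ≠ 0)
    (hq : q ≠ 0) (R h m : K) :
    q * conditionE3 X Y q R h = q * X (conditionE2 X Y q R m)
      - (q * R + X q) * conditionE2 X Y q R m - 2 * systemS2 X Y q R h m := by
  simp only [conditionE3, invariantI3, conditionE2, invariantI2, systemS2, map_add, map_sub,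
    Derivation.leibniz, Derivation.leibniz_div, Derivation.leibniz_inv, Derivation.leibniz_pow,
    Derivation.map_ofNat, hcomm, smul_eq_mul, nsmul_eq_mul, Nat.reduceSub, pow_one]
  field_simp
  ring

theorem systemS_iff_conditionE (hcomm : ∀ f : K, X (Y f) = Y (X f)) (h2 : (2 : K) ≠ 0)
    (hq : q ≠ 0) (R h m : K) :
    systemS1 X Y q R m = 0 ∧ systemS2 X Y q R h m = 0 ↔
      conditionE2 X Y q R m = 0 ∧ conditionE3 X Y q R h = 0 := by
  have hE3 := mul_conditionE3_eq hcomm h2 hq R h m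
  rw [systemS1_eq_neg_sq_mul_conditionE2 hcomm hq,
    mul_eq_zero_iff_left (neg_ne_zero.mpr (pow_ne_zero 2 hq))]
  refine and_congr_right fun hE2 => ?_
  rw [hE2, map_zero, mul_zero, mul_zero, sub_zero, zero_sub] at hE3
  rw [← mul_eq_zero_iff_left hq (b := conditionE3 X Y q R h), hE3, neg_eq_zero,
    mul_eq_zero_iff_left h2]

end DarbouxInvariants

/-- The invariantized system (S') holds if and only if the two invariant
conditions (E2) `I2 + Q_xy = 0` and (E3)
`I3_x + q I3_y + (q_y − q_x/q) I3 = Q_x Q_xy − Q_xxy` hold, where `Q = ln q`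
(so `Q_x = q_x/q`). -/
theorem invariantized_system_iff_invariant_conditions
    {K : Type*} [Field K] [CharZero K]
    (X Y : Derivation ℚ K K) (hcomm : ∀ f : K, X (Y f) = Y (X f))
    (q R h m : K) (hq : q ≠ 0)
    (I2 I3 : K)
    (hI2 : I2 = 2 * m - Y R + X (R / q))
    (hI3 : I3 = 2 * h + X (R / q) - R ^ 2 / (2 * q)) :
    ((-2 * q ^ 2 * m + q ^ 2 * Y R + X q * R + Y q * X q - q * X R
        - X (Y q) * q = 0) ∧
     (X q * h - q * X h - q ^ 2 * Y h - X q * m + X q * Y R + q * X m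
        - q * X (Y R) - Y q * q * h - q * R * m + q * R * Y R = 0))
    ↔
    ((I2 + Y (X q / q) = 0) ∧
     (X I3 + q * Y I3 + (Y q - X q / q) * I3
        = (X q / q) * Y (X q / q) - X (Y (X q / q)))) := by
  subst hI2 hI3
  rw [← sub_eq_zero (a := X _ + _ + _)]
  exact systemS_iff_conditionE hcomm two_ne_zero hq R h m
end

section
/- Let z, w, φ ∈ K with z_x ≠ 0, z_y ≠ 0, φ ≠ 0, and suppose w_x = φ·z_x and w_y = φ·z_y (that is, w plays the role of F(z) for an arbitrary function F with F' = φ). Set q = −z_x/z_y. Then −w_x/w_y = q, and I3 = I30(w) := −w_xxy/w_x + w_xx·w_xy/w_x² + w_xy²/(2·w_x·w_y) satisfies equation (E3): ∂x(I3) + q·∂y(I3) + (q_y − q_x/q)·I3 = (q_x/q)·∂y(q_x/q) − ∂x(∂y(q_x/q)). -/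
/-!
Since `w_x / w_y = z_x / z_y`, we have `q = -w_x / w_y`, so everything is expressed through `w`
alone. Equation (E3) for `I30(w)` is then an identity between rational functions of the
derivatives of `w` with denominators powers of `w_x` and `w_y`, valid as soon as mixed
derivatives commute: expanding all derivatives and clearing denominators leaves a polynomial
identity.
-/

namespace Derivation

@[simp]
theorem map_ofNat_s15 {R A M : Type*} [CommSemiring R] [CommSemiring A] [AddCommMonoid M]
    [Algebra R A] [Module A M] [Module R M] (D : Derivation R A M) (n : ℕ) [n.AtLeastTwo] :
    D (no_index (OfNat.ofNat n : A)) = 0 :=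
  D.map_natCast n

end Derivation

section E3

variable {R K : Type*} [CommRing R] [Field K] [Algebra R K] (X Y : Derivation R K K)

def I30 (w : K) : K :=
  -(X (X (Y w))) / X w + X (X w) * X (Y w) / (X w) ^ 2 + (X (Y w)) ^ 2 / (2 * X w * Y w)

def SolvesE3 (q I : K) : Prop :=
  X I + q * Y I + (Y q - X q / q) * I = (X q / q) * Y (X q / q) - X (Y (X q / q))

theorem solvesE3_I30 [NeZero (2 : K)] (hcomm : ∀ f, X (Y f) = Y (X f)) {w : K}
    (hx : X w ≠ 0) (hy : Y w ≠ 0) : SolvesE3 X Y (-(X w) / Y w) (I30 X Y w) := by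
  -- `hcomm` pushes every `Y` outward, so each mixed derivative of `w` has a single normal form
  -- and `ring` may treat the derivatives of `w` as independent variables.
  simp only [SolvesE3, I30, Derivation.leibniz_div, Derivation.leibniz_inv, Derivation.leibniz,
    Derivation.leibniz_pow, Derivation.map_ofNat_s15, map_neg, map_add, map_sub, smul_eq_mul,
    nsmul_eq_mul, Nat.cast_ofNat, Nat.add_one_sub_one, pow_one, hcomm]
  field_simp
  ring

end E3

/-- Another large class of particular solutions of (E3): if `w` plays the
role of `F(z)` (i.e. `w_x = φ z_x`, `w_y = φ z_y` for some `φ ≠ 0`), then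
`−w_x/w_y = q` and `I3 = I30(w)` still satisfies equation (E3) with
`q = −z_x/z_y`. -/
theorem particular_solution_I30_of_F {K : Type*} [Field K] [CharZero K]
    (X Y : Derivation ℚ K K) (hcomm : ∀ f : K, X (Y f) = Y (X f))
    (z w φ : K) (hzx : X z ≠ 0) (hzy : Y z ≠ 0) (hφ : φ ≠ 0)
    (hwx : X w = φ * X z) (hwy : Y w = φ * Y z)
    (q I3 : K)
    (hq : q = -(X z) / Y z)
    (hI3 : I3 = -(X (X (Y w))) / X w + X (X w) * X (Y w) / (X w) ^ 2
        + (X (Y w)) ^ 2 / (2 * X w * Y w)) :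
    -(X w) / Y w = q ∧
    X I3 + q * Y I3 + (Y q - X q / q) * I3
      = (X q / q) * Y (X q / q) - X (Y (X q / q)) := by
  have hq_w : q = -(X w) / Y w := by
    rw [hq, hwx, hwy, neg_div, neg_div, mul_div_mul_left _ _ hφ]
  refine ⟨hq_w.symm, ?_⟩
  subst hq_w hI3
  exact solvesE3_I30 X Y hcomm (by simp [hwx, hφ, hzx]) (by simp [hwy, hφ, hzy])
end

section
/- Let z, w ∈ K with z_x ≠ 0 and z_y ≠ 0, and suppose w_x·z_y = w_y·z_x (that is, w is a function of z). Then I = w·z_x·z_y satisfies the homogeneous equation I·(z_xx/z_x − z_x·z_yy/z_y²) − I_x + (z_x/z_y)·I_y = 0, which is the homogeneous part of the invariant equation (E3) written with q = −z_x/z_y. -/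
/-!
Expanding `I = w z_x z_y` by the Leibniz rule, every second derivative of `z` cancels except
for a commutator, and the left-hand side collapses to
`-z_x ((w_x z_y - w_y z_x) + w (∂x ∂y z - ∂y ∂x z))`: the first bracket vanishes because `w` is
a function of `z`, the second because the derivations commute.
-/

namespace Derivation

variable {R K : Type*} [CommRing R] [Field K] [Algebra R K]

def e3Homogeneous (X Y : Derivation R K K) (z I : K) : K :=
  I * (X (X z) / X z - X z * Y (Y z) / (Y z) ^ 2) - X I + (X z / Y z) * Y I

theorem e3Homogeneous_mul_mul (X Y : Derivation R K K) {z : K} (hzx : X z ≠ 0)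
    (hzy : Y z ≠ 0) (w : K) :
    e3Homogeneous X Y z (w * X z * Y z) =
      -X z * ((X w * Y z - Y w * X z) + w * (X (Y z) - Y (X z))) := by
  simp only [e3Homogeneous, leibniz, smul_eq_mul]
  field_simp
  ring

end Derivation

/-- If `w` is a function of `z` (i.e. `w_x z_y = w_y z_x`), then
`I = w z_x z_y` satisfies the homogeneous part of the invariant equation
(E3): `I (z_xx/z_x − z_x z_yy/z_y²) − I_x + (z_x/z_y) I_y = 0`. -/
theorem homogeneous_solution {K : Type*} [Field K] [CharZero K]
    (X Y : Derivation ℚ K K) (hcomm : ∀ f : K, X (Y f) = Y (X f))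
    (z w : K) (hzx : X z ≠ 0) (hzy : Y z ≠ 0)
    (hw : X w * Y z = Y w * X z)
    (I : K) (hI : I = w * X z * Y z) :
    I * (X (X z) / X z - X z * Y (Y z) / (Y z) ^ 2) - X I
      + (X z / Y z) * Y I = 0 := by
  change Derivation.e3Homogeneous X Y z I = 0
  rw [hI, Derivation.e3Homogeneous_mul_mul X Y hzx hzy, hw, hcomm]
  ring
end

section
/- Let z, I ∈ K with z_x ≠ 0 and z_y ≠ 0, and suppose I satisfies the homogeneous equation I·(z_xx/z_x − z_x·z_yy/z_y²) − I_x + (z_x/z_y)·I_y = 0. Then w := I/(z_x·z_y) satisfies w_x·z_y = w_y·z_x (that is, every solution of the homogeneous equation has the form w·z_x·z_y with w a function of z). -/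
/-!
Substituting `I = w z_x z_y` into the homogeneous equation, every term containing `w` itself
cancels (the mixed derivatives `z_xy` and `z_yx` agree), leaving `z_x (w_y z_x − w_x z_y) = 0`.
-/

section

variable {R K : Type*} [CommRing R] [Field K] [Algebra R K]

theorem homogeneous_lhs_mul_eq (X Y : Derivation R K K) {z : K} (hzx : X z ≠ 0)
    (hzy : Y z ≠ 0) (hcomm : X (Y z) = Y (X z)) (w : K) :
    let I := w * (X z * Y z)
    I * (X (X z) / X z - X z * Y (Y z) / (Y z) ^ 2) - X I + (X z / Y z) * Y I =
      X z * (Y w * X z - X w * Y z) := by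
  simp only [Derivation.leibniz, smul_eq_mul, hcomm]
  field_simp
  ring

end

/-- Every solution of the homogeneous equation has the form `w z_x z_y` with
`w` a function of `z`: if `I` satisfies
`I (z_xx/z_x − z_x z_yy/z_y²) − I_x + (z_x/z_y) I_y = 0`, then
`w := I/(z_x z_y)` satisfies `w_x z_y = w_y z_x`. -/
theorem homogeneous_solution_converse {K : Type*} [Field K] [CharZero K]
    (X Y : Derivation ℚ K K) (hcomm : ∀ f : K, X (Y f) = Y (X f))
    (z I : K) (hzx : X z ≠ 0) (hzy : Y z ≠ 0)
    (hhom : I * (X (X z) / X z - X z * Y (Y z) / (Y z) ^ 2) - X I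
        + (X z / Y z) * Y I = 0)
    (w : K) (hw : w = I / (X z * Y z)) :
    X w * Y z = Y w * X z := by
  have hI : I = w * (X z * Y z) := by
    rw [hw, div_mul_cancel₀ _ (mul_ne_zero hzx hzy)]
  rw [hI, homogeneous_lhs_mul_eq X Y hzx hzy (hcomm z) w] at hhom
  exact (sub_eq_zero.mp ((mul_eq_zero.mp hhom).resolve_left hzx)).symm
end
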